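/- Let r, q, σ, a, b, R, T satisfy σ > 0, b > 0, 0 ≤ R < 1, T > 0, and for 0 ≤ t < T and V > b·e^{−a(T−t)} define B(V,t) = R·e^{−r(T−t)} + (1 − R)·e^{−r(T−t)}·W(V,t), where W(V,t) = N(d₁) − (V/(b e^{−a(T−t)}))^{1 − 2(r−q−a)/σ²}·N(d₂), with d₁ = (ln(V/b) + (r−q−σ²/2)(T−t))/(σ√(T−t)) and d₂ = (ln(b/V) + (r−q−2a−σ²/2)(T−t))/(σ√(T−t)). Then for all V > b·e^{−a(T−t)}: ∂B/∂V(V,t) > 0 and R·e^{−r(T−t)} < B(V,t) < e^{−r(T−t)}. -/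

import Mathlib

open Real Set Filter Topology

noncomputable def stdNormalCDF (x : ℝ) : ℝ :=
  (Real.sqrt (2 * Real.pi))⁻¹ * ∫ t in Set.Iic x, Real.exp (-t ^ 2 / 2)

/-!
Put `m = log (V / V_b) > 0`, `s = σ √(T - t)` and `ν = (r - q - a - σ² / 2) (T - t)`. Then
`W = N((ν + m) / s) - e^{-2νm/s²} N((ν - m) / s)`, which vanishes at `m = 0` and is `< 1` since
`N < 1`. The reflection identity `φ((ν + m) / s) = e^{-2νm/s²} φ((ν - m) / s)` reduces `∂W/∂m` to
`(2 e^{-2νm/s²} / s) (φ(y) + y N(y) + (m / s) N(y))` with `y = (ν - m) / s`, and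
`φ(y) + y N(y) = (2π)^{-1/2} ∫_{t < y} (y - t) e^{-t²/2} dt > 0`. So `W` increases strictly in `m`,
hence in `V`, and `0 < W < 1` gives the bounds on `B`.
-/

open MeasureTheory

noncomputable def stdNormalPDF (x : ℝ) : ℝ := (√(2 * π))⁻¹ * exp (-x ^ 2 / 2)

lemma integrable_exp_neg_sq_div_two : Integrable fun t : ℝ => exp (-t ^ 2 / 2) := by
  convert integrable_exp_neg_mul_sq (b := 1 / 2) one_half_pos using 3; ring

lemma integrable_mul_exp_neg_sq_div_two : Integrable fun t : ℝ => t * exp (-t ^ 2 / 2) := by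
  convert integrable_mul_exp_neg_mul_sq (b := 1 / 2) one_half_pos using 4; ring

lemma integral_exp_neg_sq_div_two : ∫ t, exp (-t ^ 2 / 2) = √(2 * π) := by
  convert integral_gaussian (1 / 2) using 4 <;> ring

lemma tendsto_exp_neg_sq_div_two_atBot : Tendsto (fun t : ℝ => exp (-t ^ 2 / 2)) atBot (𝓝 0) := by
  have := (tendsto_rpow_abs_mul_exp_neg_mul_sq_cocompact one_half_pos 0).mono_left atBot_le_cocompact
  convert this using 2 with t
  rw [rpow_zero, one_mul]; congr 1; ring

lemma integral_Iic_mul_exp_neg_sq_div_two (y : ℝ) :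
    ∫ t in Iic y, t * exp (-t ^ 2 / 2) = -exp (-y ^ 2 / 2) := by
  have hderiv (t : ℝ) : HasDerivAt (fun t => -exp (-t ^ 2 / 2)) (t * exp (-t ^ 2 / 2)) t :=
    (((hasDerivAt_pow 2 t).fun_neg.div_const 2).exp).fun_neg.congr_deriv (by push_cast; ring)
  rw [integral_Iic_of_hasDerivAt_of_tendsto' (fun t _ => hderiv t)
    integrable_mul_exp_neg_sq_div_two.integrableOn
    (by simpa using tendsto_exp_neg_sq_div_two_atBot.neg), sub_zero]

lemma setIntegral_pos_of_forall_pos {α : Type*} [MeasurableSpace α] {μ : Measure α} {f : α → ℝ}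
    {s : Set α} (hs : MeasurableSet s) (hμs : μ s ≠ 0) (hf : IntegrableOn f s μ)
    (hpos : ∀ x ∈ s, 0 < f x) : 0 < ∫ x in s, f x ∂μ := by
  have hsupp : Function.support f ∩ s = s := inter_eq_right.2 fun x hx => (hpos x hx).ne'
  rw [setIntegral_pos_iff_support_of_nonneg_ae
    ((ae_restrict_iff' hs).2 (.of_forall fun x hx => (hpos x hx).le)) hf, hsupp]
  exact pos_iff_ne_zero.2 hμs

lemma setIntegral_exp_neg_sq_div_two_pos {s : Set ℝ} (hs : MeasurableSet s) (hvol : volume s ≠ 0) :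
    0 < ∫ t in s, exp (-t ^ 2 / 2) :=
  setIntegral_pos_of_forall_pos hs hvol integrable_exp_neg_sq_div_two.integrableOn
    fun _ _ => exp_pos _

lemma stdNormalCDF_pos (x : ℝ) : 0 < stdNormalCDF x :=
  mul_pos (by positivity) (setIntegral_exp_neg_sq_div_two_pos measurableSet_Iic (by simp))

lemma stdNormalCDF_lt_one (x : ℝ) : stdNormalCDF x < 1 := by
  have htail := setIntegral_exp_neg_sq_div_two_pos measurableSet_Ioi (by simp : volume (Ioi x) ≠ 0)
  have hsplit := intervalIntegral.integral_Iic_add_Ioi (b := x)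
    integrable_exp_neg_sq_div_two.integrableOn integrable_exp_neg_sq_div_two.integrableOn
  rw [integral_exp_neg_sq_div_two] at hsplit
  rw [stdNormalCDF, inv_mul_lt_one₀ (by positivity)]
  linarith

lemma hasDerivAt_stdNormalCDF (x : ℝ) : HasDerivAt stdNormalCDF (stdNormalPDF x) x := by
  have hint := integrable_exp_neg_sq_div_two
  have hsplit : (fun y : ℝ => ∫ t in Iic y, exp (-t ^ 2 / 2)) =
      fun y => (∫ t in Iic 0, exp (-t ^ 2 / 2)) + ∫ t in (0 : ℝ)..y, exp (-t ^ 2 / 2) := by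
    funext y
    rw [← intervalIntegral.integral_Iic_sub_Iic hint.integrableOn hint.integrableOn]
    ring
  have hcont : Continuous fun t : ℝ => exp (-t ^ 2 / 2) := by fun_prop
  have hFTC := intervalIntegral.integral_hasDerivAt_right hint.intervalIntegrable
    (hcont.stronglyMeasurableAtFilter _ _) hcont.continuousAt (a := 0) (b := x)
  have hderiv : HasDerivAt (fun y : ℝ => ∫ t in Iic y, exp (-t ^ 2 / 2)) (exp (-x ^ 2 / 2)) x := by
    rw [hsplit]; exact hFTC.const_add _
  exact hderiv.const_mul _

lemma stdNormalPDF_add_mul_stdNormalCDF_pos (y : ℝ) : 0 < stdNormalPDF y + y * stdNormalCDF y := by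
  have hint : Integrable fun t : ℝ => (y - t) * exp (-t ^ 2 / 2) := by
    simp_rw [sub_mul]
    exact (integrable_exp_neg_sq_div_two.const_mul y).sub integrable_mul_exp_neg_sq_div_two
  have hrepr : stdNormalPDF y + y * stdNormalCDF y =
      (√(2 * π))⁻¹ * ∫ t in Iio y, (y - t) * exp (-t ^ 2 / 2) := by
    simp only [← integral_Iic_eq_integral_Iio, sub_mul]
    rw [integral_sub (integrable_exp_neg_sq_div_two.const_mul y).integrableOn
      integrable_mul_exp_neg_sq_div_two.integrableOn, integral_const_mul,
      integral_Iic_mul_exp_neg_sq_div_two, stdNormalPDF, stdNormalCDF]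
    ring
  rw [hrepr]
  exact mul_pos (by positivity) (setIntegral_pos_of_forall_pos measurableSet_Iio (by simp)
    hint.integrableOn fun t ht => mul_pos (sub_pos.2 ht) (exp_pos _))

/-- Survival probability up to maturity of a Brownian motion with total drift `ν` and total
volatility `s` started at distance `m` above an absorbing barrier (reflection principle). -/
noncomputable def survivalProb (ν s m : ℝ) : ℝ :=
  stdNormalCDF ((ν + m) / s) - exp (-2 * ν * m / s ^ 2) * stdNormalCDF ((ν - m) / s)

section survivalProb

variable {ν s m : ℝ}

lemma survivalProb_zero (ν s : ℝ) : survivalProb ν s 0 = 0 := by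
  simp [survivalProb]

lemma survivalProb_lt_one (ν s m : ℝ) : survivalProb ν s m < 1 := by
  have := stdNormalCDF_lt_one ((ν + m) / s)
  have := mul_pos (exp_pos (-2 * ν * m / s ^ 2)) (stdNormalCDF_pos ((ν - m) / s))
  rw [survivalProb]
  linarith

lemma stdNormalPDF_add_div_eq (hs : s ≠ 0) :
    stdNormalPDF ((ν + m) / s) = exp (-2 * ν * m / s ^ 2) * stdNormalPDF ((ν - m) / s) := by
  rw [stdNormalPDF, stdNormalPDF, mul_left_comm, ← exp_add]
  congr 2
  field_simp
  ring

lemma hasDerivAt_survivalProb (hs : s ≠ 0) :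
    HasDerivAt (survivalProb ν s) (2 * exp (-2 * ν * m / s ^ 2) / s *
      (stdNormalPDF ((ν - m) / s) + ν / s * stdNormalCDF ((ν - m) / s))) m := by
  have hup := (hasDerivAt_stdNormalCDF _).comp m (((hasDerivAt_id m).const_add ν).div_const s)
  have hdown := (hasDerivAt_stdNormalCDF _).comp m (((hasDerivAt_id m).const_sub ν).div_const s)
  have hweight := ((hasDerivAt_id m).const_mul (-2 * ν)).div_const (s ^ 2) |>.exp
  refine (hup.sub (hweight.mul hdown)).congr_deriv ?_
  simp only [Function.comp_def, id, stdNormalPDF_add_div_eq hs]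
  field_simp
  ring

lemma deriv_survivalProb_pos (hs : 0 < s) (hm : 0 < m) : 0 < deriv (survivalProb ν s) m := by
  rw [(hasDerivAt_survivalProb hs.ne').deriv]
  have hdrift : ν / s = (ν - m) / s + m / s := by ring
  rw [hdrift, add_mul, ← add_assoc]
  exact mul_pos (by positivity) (add_pos (stdNormalPDF_add_mul_stdNormalCDF_pos _)
    (mul_pos (div_pos hm hs) (stdNormalCDF_pos _)))

lemma strictMonoOn_survivalProb (hs : 0 < s) : StrictMonoOn (survivalProb ν s) (Ici 0) := by
  refine strictMonoOn_of_deriv_pos (convex_Ici 0)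
    (fun m _ => (hasDerivAt_survivalProb hs.ne').continuousAt.continuousWithinAt) ?_
  rw [interior_Ici]
  exact fun m hm => deriv_survivalProb_pos hs hm

lemma survivalProb_pos (hs : 0 < s) (hm : 0 < m) : 0 < survivalProb ν s m := by
  simpa [survivalProb_zero] using strictMonoOn_survivalProb (ν := ν) hs self_mem_Ici hm.le hm

lemma hasDerivAt_survivalProb_log_div {K V : ℝ} (hs : s ≠ 0) (hK : 0 < K) (hV : 0 < V) :
    HasDerivAt (fun x => survivalProb ν s (log (x / K)))
      (deriv (survivalProb ν s) (log (V / K)) / V) V := by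
  have hlog := ((hasDerivAt_id' V).div_const K).log (div_pos hV hK).ne'
  refine ((hasDerivAt_survivalProb hs).differentiableAt.hasDerivAt.comp V hlog).congr_deriv ?_
  field_simp

end survivalProb

lemma survivalProb_log_div_barrier (r q σ a b τ V : ℝ) (hσ : σ ≠ 0) (hb : 0 < b) (hτ : 0 < τ)
    (hV : 0 < V) :
    survivalProb ((r - q - a - σ ^ 2 / 2) * τ) (σ * √τ) (log (V / (b * exp (-a * τ)))) =
      stdNormalCDF ((log (V / b) + (r - q - σ ^ 2 / 2) * τ) / (σ * √τ)) -
        (V / (b * exp (-a * τ))) ^ (1 - 2 * (r - q - a) / σ ^ 2) *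
          stdNormalCDF ((log (b / V) + (r - q - 2 * a - σ ^ 2 / 2) * τ) / (σ * √τ)) := by
  have hlog : log (V / (b * exp (-a * τ))) = log (V / b) + a * τ := by
    rw [div_mul_eq_div_div, log_div (by positivity) (exp_pos _).ne', log_exp]
    ring
  have hsq : (σ * √τ) ^ 2 = σ ^ 2 * τ := by rw [mul_pow, sq_sqrt hτ.le]
  rw [survivalProb, rpow_def_of_pos (by positivity), hlog, hsq, log_div hb.ne' hV.ne',
    log_div hV.ne' hb.ne']
  congr 3
  · ring
  · field_simp
    ring
  · ring

theorem credit_bond_monotone_and_bounds_general (r q σ a b R T : ℝ)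
    (hσ : 0 < σ) (hb : 0 < b) (hR1 : R < 1)
    (W B : ℝ → ℝ → ℝ)
    (hW : ∀ t, 0 ≤ t → t < T → ∀ V > b * Real.exp (-a * (T - t)),
      W V t = stdNormalCDF ((Real.log (V / b) + (r - q - σ ^ 2 / 2) * (T - t)) / (σ * Real.sqrt (T - t))) -
        (V / (b * Real.exp (-a * (T - t)))) ^ (1 - 2 * (r - q - a) / σ ^ 2) *
          stdNormalCDF ((Real.log (b / V) + (r - q - 2 * a - σ ^ 2 / 2) * (T - t)) / (σ * Real.sqrt (T - t))))
    (hB : ∀ t, 0 ≤ t → t < T → ∀ V > b * Real.exp (-a * (T - t)),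
      B V t = R * Real.exp (-r * (T - t)) + (1 - R) * Real.exp (-r * (T - t)) * W V t) :
    ∀ t, 0 ≤ t → t < T → ∀ V > b * Real.exp (-a * (T - t)),
      0 < deriv (fun V => B V t) V ∧
      R * Real.exp (-r * (T - t)) < B V t ∧ B V t < Real.exp (-r * (T - t)) := by
  intro t ht0 htT V hV
  set Vb := b * exp (-a * (T - t))
  set w := survivalProb ((r - q - a - σ ^ 2 / 2) * (T - t)) (σ * √(T - t))
  have hτ : 0 < T - t := sub_pos.2 htT
  have hs : 0 < σ * √(T - t) := by positivity
  have hVb : 0 < Vb := by positivity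
  have hB_eq (x : ℝ) (hx : x > Vb) :
      B x t = R * exp (-r * (T - t)) + (1 - R) * exp (-r * (T - t)) * w (log (x / Vb)) := by
    rw [hB t ht0 htT x hx, hW t ht0 htT x hx,
      ← survivalProb_log_div_barrier r q σ a b _ x hσ.ne' hb hτ (hVb.trans hx)]
  have hm : 0 < log (V / Vb) := log_pos ((one_lt_div hVb).2 hV)
  have hw_pos : 0 < w (log (V / Vb)) := survivalProb_pos hs hm
  have hw_lt_one : w (log (V / Vb)) < 1 := survivalProb_lt_one _ _ _
  have hdisc : 0 < (1 - R) * exp (-r * (T - t)) := mul_pos (sub_pos.2 hR1) (exp_pos _)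
  have hderiv : HasDerivAt (fun x => B x t)
      ((1 - R) * exp (-r * (T - t)) * (deriv w (log (V / Vb)) / V)) V :=
    (((hasDerivAt_survivalProb_log_div hs.ne' hVb (hVb.trans hV)).const_mul _).const_add
      (R * exp (-r * (T - t)))).congr_of_eventuallyEq
      (eventually_of_mem (Ioi_mem_nhds hV) hB_eq)
  refine ⟨?_, ?_, ?_⟩
  · rw [hderiv.deriv]
    exact mul_pos hdisc (div_pos (deriv_survivalProb_pos hs hm) (hVb.trans hV))
  · rw [hB_eq V hV]
    linarith [mul_pos hdisc hw_pos]
  · rw [hB_eq V hV]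
    linarith [mul_pos hdisc (sub_pos.2 hw_lt_one)]

theorem credit_bond_monotone_and_bounds (r q σ a b R T : ℝ)
    (hσ : 0 < σ) (hb : 0 < b) (hR0 : 0 ≤ R) (hR1 : R < 1) (hT : 0 < T)
    (W B : ℝ → ℝ → ℝ)
    (hW : ∀ t, 0 ≤ t → t < T → ∀ V > b * Real.exp (-a * (T - t)),
      W V t = stdNormalCDF ((Real.log (V / b) + (r - q - σ ^ 2 / 2) * (T - t)) / (σ * Real.sqrt (T - t))) -
        (V / (b * Real.exp (-a * (T - t)))) ^ (1 - 2 * (r - q - a) / σ ^ 2) *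
          stdNormalCDF ((Real.log (b / V) + (r - q - 2 * a - σ ^ 2 / 2) * (T - t)) / (σ * Real.sqrt (T - t))))
    (hB : ∀ t, 0 ≤ t → t < T → ∀ V > b * Real.exp (-a * (T - t)),
      B V t = R * Real.exp (-r * (T - t)) + (1 - R) * Real.exp (-r * (T - t)) * W V t) :
    ∀ t, 0 ≤ t → t < T → ∀ V > b * Real.exp (-a * (T - t)),
      0 < deriv (fun V => B V t) V ∧
      R * Real.exp (-r * (T - t)) < B V t ∧ B V t < Real.exp (-r * (T - t)) :=
  credit_bond_monotone_and_bounds_general r q σ a b R T hσ hb hR1 W B hW hB
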